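/- Let β > 0 and suppose the matrix I + βW is positive definite. Then for every z ∈ ℂⁿ, the function x ↦ D_{β,W}(x; z) has a unique global minimizer over ℂⁿ: there exists x̂ ∈ ℂⁿ with D_{β,W}(x̂; z) < D_{β,W}(x; z) for all x ≠ x̂. -/

import Mathlib

open Finset Matrix Filter

/-!
With `q(u) = uᵀ(I + βW)u`, expanding `‖z - x‖²` gives
`D(x; z) = ½‖z‖² - Re⟨z, x⟩ + β‖x‖₁ + ½ q(|x|)`.
Since `I + βW` is positive definite with nonnegative entries, `q` is strictly convex and strictly
increasing on the nonnegative orthant. Combined with `|(x + y)/2| ≤ (|x| + |y|)/2`, this makes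
`D(·; z)` strictly midpoint convex: if `|x| ≠ |y|` the convexity of `q` is strict, and if
`|x| = |y|` but `x ≠ y` the triangle inequality is strict in some coordinate. As `D(x; z) ≥ β‖x‖₁`,
`D(·; z)` is coercive and continuous, so it has a minimizer, unique by strict midpoint convexity.
-/

theorem Continuous.exists_forall_ne_lt_of_midpoint_lt {X : Type*} [TopologicalSpace X]
    [AddCommGroup X] [Module ℝ X] {f : X → ℝ} (hf : Continuous f)
    (hlim : Tendsto f (cocompact X) atTop)
    (hmid : ∀ x y, x ≠ y → 2 * f ((1 / 2 : ℝ) • (x + y)) < f x + f y) :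
    ∃ x₀, ∀ x, x ≠ x₀ → f x₀ < f x := by
  obtain ⟨x₀, hx₀⟩ := hf.exists_forall_le hlim
  refine ⟨x₀, fun x hx => ?_⟩
  linarith [hmid x₀ x hx.symm, hx₀ ((1 / 2 : ℝ) • (x₀ + x))]

namespace Matrix

variable {ι : Type*} [Fintype ι]

lemma add_dotProduct_mulVec_add (A : Matrix ι ι ℝ) (u v : ι → ℝ) :
    (u + v) ⬝ᵥ A *ᵥ (u + v) = u ⬝ᵥ A *ᵥ u + (u ⬝ᵥ A *ᵥ v + v ⬝ᵥ A *ᵥ u) + v ⬝ᵥ A *ᵥ v := by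
  simp only [mulVec_add, dotProduct_add, add_dotProduct]
  ring

lemma dotProduct_mulVec_midpoint (A : Matrix ι ι ℝ) (u v : ι → ℝ) :
    2 * ((1 / 2 : ℝ) • (u + v)) ⬝ᵥ A *ᵥ ((1 / 2 : ℝ) • (u + v))
      + (1 / 2) * ((u - v) ⬝ᵥ A *ᵥ (u - v)) = u ⬝ᵥ A *ᵥ u + v ⬝ᵥ A *ᵥ v := by
  simp only [mulVec_smul, mulVec_add, mulVec_sub, dotProduct_smul, smul_dotProduct,
    dotProduct_add, add_dotProduct, dotProduct_sub, sub_dotProduct, smul_eq_mul]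
  ring

lemma dotProduct_mulVec_nonneg_of_nonneg {A : Matrix ι ι ℝ} (hA : ∀ i j, 0 ≤ A i j)
    {u v : ι → ℝ} (hu : 0 ≤ u) (hv : 0 ≤ v) : 0 ≤ u ⬝ᵥ A *ᵥ v :=
  dotProduct_nonneg_of_nonneg hu fun i => sum_nonneg fun j _ => mul_nonneg (hA i j) (hv j)

lemma dotProduct_mulVec_le_of_le {A : Matrix ι ι ℝ} (hA : A.PosSemidef)
    (hA₀ : ∀ i j, 0 ≤ A i j) {u v : ι → ℝ} (hu : 0 ≤ u) (huv : u ≤ v) :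
    u ⬝ᵥ A *ᵥ u ≤ v ⬝ᵥ A *ᵥ v := by
  have hd : 0 ≤ v - u := sub_nonneg.2 huv
  have hexp := add_dotProduct_mulVec_add A u (v - u)
  rw [add_sub_cancel] at hexp
  have hq : 0 ≤ (v - u) ⬝ᵥ A *ᵥ (v - u) := by
    simpa using hA.dotProduct_mulVec_nonneg (v - u)
  linarith [dotProduct_mulVec_nonneg_of_nonneg hA₀ hu hd,
    dotProduct_mulVec_nonneg_of_nonneg hA₀ hd hu]

lemma dotProduct_mulVec_lt_of_le_of_ne {A : Matrix ι ι ℝ} (hA : A.PosDef)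
    (hA₀ : ∀ i j, 0 ≤ A i j) {u v : ι → ℝ} (hu : 0 ≤ u) (huv : u ≤ v) (hne : u ≠ v) :
    u ⬝ᵥ A *ᵥ u < v ⬝ᵥ A *ᵥ v := by
  have hd : 0 ≤ v - u := sub_nonneg.2 huv
  have hexp := add_dotProduct_mulVec_add A u (v - u)
  rw [add_sub_cancel] at hexp
  have hq : 0 < (v - u) ⬝ᵥ A *ᵥ (v - u) := by
    simpa using hA.dotProduct_mulVec_pos (sub_ne_zero.2 hne.symm)
  linarith [dotProduct_mulVec_nonneg_of_nonneg hA₀ hu hd,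
    dotProduct_mulVec_nonneg_of_nonneg hA₀ hd hu]

lemma PosDef.two_mul_dotProduct_mulVec_midpoint_lt {A : Matrix ι ι ℝ} (hA : A.PosDef)
    {u v : ι → ℝ} (hne : u ≠ v) :
    2 * ((1 / 2 : ℝ) • (u + v)) ⬝ᵥ A *ᵥ ((1 / 2 : ℝ) • (u + v))
      < u ⬝ᵥ A *ᵥ u + v ⬝ᵥ A *ᵥ v := by
  have hq : 0 < (u - v) ⬝ᵥ A *ᵥ (u - v) := by
    simpa using hA.dotProduct_mulVec_pos (sub_ne_zero.2 hne)
  linarith [dotProduct_mulVec_midpoint A u v]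

end Matrix

section ComponentwiseNorm

variable {ι E : Type*} [Fintype ι] [NormedAddCommGroup E] [NormedSpace ℝ E]
  [StrictConvexSpace ℝ E]

lemma two_mul_dotProduct_mulVec_norm_midpoint_lt {A : Matrix ι ι ℝ} (hA : A.PosDef)
    (hA₀ : ∀ i j, 0 ≤ A i j) {x y : ι → E} (hxy : x ≠ y) :
    2 * ((fun i => ‖(1 / 2 : ℝ) • (x i + y i)‖) ⬝ᵥ A *ᵥ fun i => ‖(1 / 2 : ℝ) • (x i + y i)‖)
      < ((fun i => ‖x i‖) ⬝ᵥ A *ᵥ fun i => ‖x i‖) + ((fun i => ‖y i‖) ⬝ᵥ A *ᵥ fun i => ‖y i‖) := by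
  set u : ι → ℝ := fun i => ‖x i‖
  set v : ι → ℝ := fun i => ‖y i‖
  set m : ι → ℝ := fun i => ‖(1 / 2 : ℝ) • (x i + y i)‖
  have hm₀ : 0 ≤ m := fun i => norm_nonneg _
  have hmw : m ≤ (1 / 2 : ℝ) • (u + v) := fun i => by
    simp only [m, u, v, Pi.smul_apply, Pi.add_apply, smul_eq_mul, norm_smul,
      Real.norm_of_nonneg (one_div_nonneg.2 zero_le_two)]
    gcongr
    exact norm_add_le _ _
  by_cases huv : u = v
  · -- equal moduli: the triangle inequality is strict where `x` and `y` differ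
    obtain ⟨i, hi⟩ := Function.ne_iff.1 hxy
    have hmi : m i < u i := (norm_midpoint_lt_iff (congrFun huv i)).2 hi
    have huu : (1 / 2 : ℝ) • (u + u) = u := by
      rw [← two_smul ℝ u, smul_smul]; norm_num
    rw [← huv, huu] at hmw
    have hmu : m ≠ u := fun h => hmi.ne (congrFun h i)
    have := dotProduct_mulVec_lt_of_le_of_ne hA hA₀ hm₀ hmw hmu
    rw [← huv]
    linarith
  · linarith [dotProduct_mulVec_le_of_le hA.posSemidef hA₀ hm₀ hmw,
      hA.two_mul_dotProduct_mulVec_midpoint_lt huv]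

end ComponentwiseNorm

section ProxObjective

variable {ι E : Type*} [Fintype ι] [NormedAddCommGroup E]

noncomputable def penalty (W : Matrix ι ι ℝ) (x : ι → E) : ℝ :=
  (∑ i, ‖x i‖) + (1 / 2) * ∑ i, ∑ j, W i j * (‖x i‖ * ‖x j‖)

noncomputable def proxObjective (β : ℝ) (W : Matrix ι ι ℝ) (x z : ι → E) : ℝ :=
  (1 / 2) * ∑ i, ‖z i - x i‖ ^ 2 + β * penalty W x

lemma proxObjective_eq_quadratic_form [InnerProductSpace ℝ E] [DecidableEq ι] (β : ℝ)
    (W : Matrix ι ι ℝ) (x z : ι → E) :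
    proxObjective β W x z = (1 / 2) * ∑ i, ‖z i‖ ^ 2 - ∑ i, inner ℝ (z i) (x i)
      + β * ∑ i, ‖x i‖
      + (1 / 2) * ((fun i => ‖x i‖) ⬝ᵥ (1 + β • W) *ᵥ fun i => ‖x i‖) := by
  have hW : ∑ i, ∑ j, W i j * (‖x i‖ * ‖x j‖) = (fun i => ‖x i‖) ⬝ᵥ W *ᵥ fun i => ‖x i‖ := by
    simp only [dotProduct, mulVec, mul_sum]
    exact sum_congr rfl fun i _ => sum_congr rfl fun j _ => by ring
  have hI : ∑ i, ‖x i‖ ^ 2 = (fun i => ‖x i‖) ⬝ᵥ fun i => ‖x i‖ := by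
    simp only [dotProduct, sq]
  rw [add_mulVec, one_mulVec, smul_mulVec, dotProduct_add, dotProduct_smul, smul_eq_mul, ← hW,
    ← hI]
  simp only [proxObjective, penalty, norm_sub_sq_real, sum_add_distrib, sum_sub_distrib,
    ← mul_sum]
  ring

lemma proxObjective_midpoint_lt [InnerProductSpace ℝ E] [DecidableEq ι] {β : ℝ} (hβ : 0 ≤ β)
    {W : Matrix ι ι ℝ} (hW : ∀ i j, 0 ≤ W i j) (hpd : (1 + β • W).PosDef) (z : ι → E)
    {x y : ι → E} (hxy : x ≠ y) :
    2 * proxObjective β W ((1 / 2 : ℝ) • (x + y)) z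
      < proxObjective β W x z + proxObjective β W y z := by
  have hA₀ : ∀ i j, 0 ≤ (1 + β • W) i j := fun i j => by
    simp only [Matrix.add_apply, Matrix.smul_apply, smul_eq_mul, one_apply]
    split_ifs <;> nlinarith [hW i j]
  have hq := two_mul_dotProduct_mulVec_norm_midpoint_lt hpd hA₀ hxy
  have hlin : 2 * ∑ i, inner ℝ (z i) (((1 / 2 : ℝ) • (x + y)) i)
      = ∑ i, inner ℝ (z i) (x i) + ∑ i, inner ℝ (z i) (y i) := by
    simp only [Pi.smul_apply, Pi.add_apply, inner_smul_right, inner_add_right, mul_sum,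
      ← sum_add_distrib]
    exact sum_congr rfl fun i _ => by ring
  have hl1 : 2 * ∑ i, ‖((1 / 2 : ℝ) • (x + y)) i‖ ≤ ∑ i, ‖x i‖ + ∑ i, ‖y i‖ := by
    simp only [Pi.smul_apply, Pi.add_apply, norm_smul, mul_sum, ← sum_add_distrib,
      Real.norm_of_nonneg (one_div_nonneg.2 zero_le_two)]
    exact sum_le_sum fun i _ => by linarith [norm_add_le (x i) (y i)]
  simp only [proxObjective_eq_quadratic_form]
  simp only [Pi.smul_apply, Pi.add_apply] at hlin hl1 ⊢
  linarith [mul_le_mul_of_nonneg_left hl1 hβ]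

lemma pi_norm_le_sum_norm (x : ι → E) : ‖x‖ ≤ ∑ i, ‖x i‖ :=
  (pi_norm_le_iff_of_nonneg (sum_nonneg fun _ _ => norm_nonneg _)).2 fun i =>
    single_le_sum (f := fun i => ‖x i‖) (fun _ _ => norm_nonneg _) (mem_univ i)

lemma mul_norm_le_proxObjective {β : ℝ} (hβ : 0 ≤ β) {W : Matrix ι ι ℝ}
    (hW : ∀ i j, 0 ≤ W i j) (x z : ι → E) : β * ‖x‖ ≤ proxObjective β W x z := by
  have hquad : 0 ≤ ∑ i, ∑ j, W i j * (‖x i‖ * ‖x j‖) :=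
    sum_nonneg fun i _ => sum_nonneg fun j _ => mul_nonneg (hW i j) (by positivity)
  have hdist : 0 ≤ ∑ i, ‖z i - x i‖ ^ 2 := by positivity
  unfold proxObjective penalty
  linarith [mul_le_mul_of_nonneg_left (pi_norm_le_sum_norm x) hβ, mul_nonneg hβ hquad]

lemma continuous_proxObjective (β : ℝ) (W : Matrix ι ι ℝ) (z : ι → E) :
    Continuous fun x => proxObjective β W x z := by
  unfold proxObjective penalty
  fun_prop

lemma tendsto_proxObjective_cocompact [ProperSpace E] {β : ℝ} (hβ : 0 < β)
    {W : Matrix ι ι ℝ} (hW : ∀ i j, 0 ≤ W i j) (z : ι → E) :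
    Tendsto (fun x => proxObjective β W x z) (cocompact (ι → E)) atTop :=
  tendsto_atTop_mono (fun x => mul_norm_le_proxObjective hβ.le hW x z)
    (tendsto_norm_cocompact_atTop.const_mul_atTop hβ)

end ProxObjective

theorem stmt8_general (n : ℕ) (W : Matrix (Fin n) (Fin n) ℝ)
    (hnonneg : ∀ i j, 0 ≤ W i j) (β : ℝ) (hβ : 0 < β)
    (hpd : ((1 : Matrix (Fin n) (Fin n) ℝ) + β • W).PosDef)
    (D : (Fin n → ℂ) → (Fin n → ℂ) → ℝ)
    (hD : D = fun x z => (1 / 2) * ∑ i, ‖z i - x i‖ ^ 2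
        + β * ((∑ i, ‖x i‖)
            + (1 / 2) * ∑ i, ∑ j, W i j * (‖x i‖ * ‖x j‖)))
    (z : Fin n → ℂ) :
    ∃ xhat : Fin n → ℂ, ∀ x : Fin n → ℂ, x ≠ xhat → D xhat z < D x z := by
  subst hD
  exact (continuous_proxObjective β W z).exists_forall_ne_lt_of_midpoint_lt
    (tendsto_proxObjective_cocompact hβ hnonneg z)
    fun x y hxy => proxObjective_midpoint_lt hβ.le hnonneg hpd z hxy

/-- If β > 0 and I + βW is positive definite, then for every z ∈ ℂⁿ the
function x ↦ D_{β,W}(x;z) has a unique global minimizer over ℂⁿ. -/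
theorem stmt8 (n : ℕ) (hn : 0 < n) (W : Matrix (Fin n) (Fin n) ℝ)
    (hsymm : ∀ i j, W i j = W j i) (hnonneg : ∀ i j, 0 ≤ W i j)
    (hdiag : ∀ i, W i i = 0) (β : ℝ) (hβ : 0 < β)
    (hpd : ((1 : Matrix (Fin n) (Fin n) ℝ) + β • W).PosDef)
    (D : (Fin n → ℂ) → (Fin n → ℂ) → ℝ)
    (hD : D = fun x z => (1 / 2) * ∑ i, ‖z i - x i‖ ^ 2
        + β * ((∑ i, ‖x i‖)
            + (1 / 2) * ∑ i, ∑ j, W i j * (‖x i‖ * ‖x j‖)))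
    (z : Fin n → ℂ) :
    ∃ xhat : Fin n → ℂ, ∀ x : Fin n → ℂ, x ≠ xhat → D xhat z < D x z :=
  stmt8_general n W hnonneg β hβ hpd D hD z
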